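/- Let μ be a Borel probability measure on a metric space (X,d) and α : [0,∞) → [0,∞) nonincreasing. If for all measurable f : X → ℝ ∪ {+∞} bounded from below with μ(f = +∞) < 1/2 one has μ(Q_t f > m(f) + r) ≤ α(√(rt)) for all r, t > 0 (where m(f) = inf{m : μ(f ≤ m) ≥ 1/2} and Q_t f(x) = inf_y{f(y) + d(x,y)²/t}), then for every Borel set A with μ(A) ≥ 1/2 and every r ≥ 0, μ(A_r) ≥ 1 - α(r), where A_r = {x : d(x,A) ≤ r}. -/

import Mathlib

/-!
For `s > r`, apply the deviation inequality with `t = 1` at level `s²` to `f = M · 1_{Aᶜ}` with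
`M > s²`, a finite truncation of the indicator `i_A` of the paper. Since `f ≥ 0` vanishes on `A`
and `μ A ≥ 1/2`, its median is `0`; and `Q₁ f ≥ min (d(·, A)²) M`, so `Q₁ f > s²` wherever
`d(·, A) > s`. Hence `μ (d(·, A) > s) ≤ α s ≤ α r`, and letting `s ↓ r` gives
`μ (d(·, A) > r) ≤ α r`.
-/

open MeasureTheory Set

/-- The median `m(f) = inf {m ∈ ℝ : μ(f ≤ m) ≥ 1/2}` of an extended-real-valued
function. -/
noncomputable def med {X : Type*} [MeasurableSpace X] (μ : Measure X) (f : X → EReal) : ℝ :=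
  sInf {m : ℝ | (1 : ENNReal) / 2 ≤ μ {x | f x ≤ (m : EReal)}}

/-- The inf-convolution `Q_t f (x) = inf_y (f y + d(x,y)²/t)` for `f : X → ℝ ∪ {+∞}`
encoded with values in `EReal`. -/
noncomputable def infConvE {X : Type*} [MetricSpace X] (t : ℝ) (f : X → EReal) (x : X) :
    EReal :=
  ⨅ y : X, f y + ((dist x y ^ 2 / t : ℝ) : EReal)

open scoped ENNReal

theorem setOf_lt_eq_iUnion_setOf_add_one_div_lt {X : Type*} (g : X → ℝ) (r : ℝ) :
    {x | r < g x} = ⋃ n : ℕ, {x | r + 1 / (n + 1) < g x} := by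
  ext x
  simp only [mem_ofPred_eq, mem_iUnion]
  constructor
  · intro h
    obtain ⟨n, hn⟩ := exists_nat_one_div_lt (sub_pos.mpr h)
    exact ⟨n, by linarith⟩
  · rintro ⟨n, hn⟩
    have : (0 : ℝ) < 1 / (n + 1) := Nat.one_div_pos_of_nat
    linarith

theorem measure_setOf_lt_le_of_forall_lt {X : Type*} [MeasurableSpace X] {μ : Measure X}
    {g : X → ℝ} {r : ℝ} {c : ℝ≥0∞} (h : ∀ s, r < s → μ {x | s < g x} ≤ c) :
    μ {x | r < g x} ≤ c := by
  have hmono : Monotone fun n : ℕ ↦ {x | r + 1 / ((n : ℝ) + 1) < g x} := by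
    intro m n hmn x hx
    simp only [mem_ofPred_eq] at hx ⊢
    have : 1 / ((n : ℝ) + 1) ≤ 1 / (m + 1) := Nat.one_div_le_one_div hmn
    linarith
  rw [setOf_lt_eq_iUnion_setOf_add_one_div_lt, hmono.measure_iUnion]
  exact iSup_le fun n ↦ h _ (lt_add_of_pos_right r Nat.one_div_pos_of_nat)

theorem one_sub_le_measure_setOf_le {X : Type*} [MeasurableSpace X] {μ : Measure X}
    [IsProbabilityMeasure μ] {g : X → ℝ} {r : ℝ} {c : ℝ≥0∞}
    (h : ∀ s, r < s → μ {x | s < g x} ≤ c) : 1 - c ≤ μ {x | g x ≤ r} := by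
  have hcover : 1 ≤ μ {x | g x ≤ r} + μ {x | r < g x} := by
    rw [← measure_univ (μ := μ)]
    refine (measure_mono fun x _ ↦ ?_).trans (measure_union_le _ _)
    exact le_or_gt (g x) r
  rw [tsub_le_iff_right]
  exact hcover.trans (by gcongr; exact measure_setOf_lt_le_of_forall_lt h)

theorem med_eq_zero_of_nonneg {X : Type*} [MeasurableSpace X] {μ : Measure X} {f : X → EReal}
    {A : Set X} (hf : ∀ x, 0 ≤ f x) (hfA : ∀ x ∈ A, f x = 0) (hA : 1 / 2 ≤ μ A) :
    med μ f = 0 := by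
  suffices {m : ℝ | (1 : ℝ≥0∞) / 2 ≤ μ {x | f x ≤ (m : EReal)}} = Ici 0 by
    rw [med, this, csInf_Ici]
  ext m
  simp only [mem_ofPred_eq, mem_Ici]
  constructor
  · intro hm
    by_contra! hm0
    have hempty : {x | f x ≤ (m : EReal)} = ∅ :=
      eq_empty_of_forall_notMem fun x hx ↦
        (hf x).not_gt (lt_of_le_of_lt hx (EReal.coe_lt_coe_iff.mpr hm0))
    simp [hempty] at hm
  · intro hm
    refine hA.trans (measure_mono fun x hx ↦ ?_)
    simp only [mem_ofPred_eq, hfA x hx]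
    exact_mod_cast hm

theorem min_le_infConvE_indicator_compl {X : Type*} [MetricSpace X] {A : Set X} {t M : ℝ}
    (ht : 0 ≤ t) (x : X) :
    ((min (Metric.infDist x A ^ 2 / t) M : ℝ) : EReal) ≤
      infConvE t (Aᶜ.indicator fun _ ↦ (M : EReal)) x := by
  refine le_iInf fun y ↦ ?_
  by_cases hy : y ∈ A
  · have hdist : Metric.infDist x A ^ 2 / t ≤ dist x y ^ 2 / t := by
      gcongr
      · exact Metric.infDist_nonneg
      · exact Metric.infDist_le_dist_of_mem hy
    rw [indicator_of_notMem (notMem_compl_iff.mpr hy), zero_add, EReal.coe_le_coe_iff]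
    exact (min_le_left _ _).trans hdist
  · have : M ≤ M + dist x y ^ 2 / t := le_add_of_nonneg_right (by positivity)
    rw [indicator_of_mem (mem_compl hy), ← EReal.coe_add, EReal.coe_le_coe_iff]
    exact (min_le_right _ _).trans this

theorem setOf_lt_infDist_subset_setOf_lt_infConvE {X : Type*} [MetricSpace X] {A : Set X}
    {s M : ℝ} (hs : 0 ≤ s) (hM : s ^ 2 < M) :
    {x | s < Metric.infDist x A} ⊆
      {x | ((s ^ 2 : ℝ) : EReal) < infConvE 1 (Aᶜ.indicator fun _ ↦ (M : EReal)) x} := by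
  intro x hx
  refine lt_of_lt_of_le ?_ (min_le_infConvE_indicator_compl zero_le_one x)
  rw [EReal.coe_lt_coe_iff, div_one]
  exact lt_min (pow_lt_pow_left₀ hx hs two_ne_zero) hM

theorem concentration_of_infConv_deviation_general {X : Type*} [MetricSpace X] [MeasurableSpace X]
    (μ : Measure X) [IsProbabilityMeasure μ]
    (α : ℝ → ℝ) (hα : AntitoneOn α (Ici 0))
    (H : ∀ f : X → EReal, Measurable f → (∃ c : ℝ, ∀ x, (c : EReal) ≤ f x) →
      μ {x | f x = ⊤} < 1 / 2 →
      ∀ r t : ℝ, 0 < r → 0 < t →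
        μ {x | ((med μ f + r : ℝ) : EReal) < infConvE t f x} ≤
          ENNReal.ofReal (α (Real.sqrt (r * t)))) :
    ∀ A : Set X, MeasurableSet A → 1 / 2 ≤ μ A → ∀ r : ℝ, 0 ≤ r →
      1 - ENNReal.ofReal (α r) ≤ μ {x | Metric.infDist x A ≤ r} := by
  intro A hA hμA r hr
  refine one_sub_le_measure_setOf_le fun s hrs ↦ ?_
  have hs : 0 < s := hr.trans_lt hrs
  -- Truncated at a finite height: with `⊤` off `A`, `μ {f = ⊤} = μ Aᶜ` could equal `1/2`.
  obtain ⟨M, hM⟩ := exists_gt (s ^ 2)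
  set f : X → EReal := Aᶜ.indicator fun _ ↦ (M : EReal)
  have hf_nonneg : ∀ x, 0 ≤ f x :=
    indicator_nonneg fun _ _ ↦ EReal.coe_nonneg.mpr ((sq_nonneg s).trans hM.le)
  have hf_ne_top : {x | f x = ⊤} = ∅ := by
    refine eq_empty_of_forall_notMem fun x ↦ ?_
    by_cases hx : x ∈ A
    · simp [f, indicator_of_notMem (notMem_compl_iff.mpr hx)]
    · simp [f, indicator_of_mem (mem_compl hx)]
  have hmed : med μ f = 0 :=
    med_eq_zero_of_nonneg hf_nonneg (fun x hx ↦ indicator_of_notMem (notMem_compl_iff.mpr hx) _)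
      hμA
  have hdev := H f (measurable_const.indicator hA.compl) ⟨0, mod_cast hf_nonneg⟩
    (by simp [hf_ne_top]) (s ^ 2) 1 (by positivity) one_pos
  rw [hmed, zero_add, mul_one, Real.sqrt_sq hs.le] at hdev
  calc μ {x | s < Metric.infDist x A}
      ≤ μ {x | ((s ^ 2 : ℝ) : EReal) < infConvE 1 f x} :=
        measure_mono (setOf_lt_infDist_subset_setOf_lt_infConvE hs.le hM)
    _ ≤ ENNReal.ofReal (α s) := hdev
    _ ≤ ENNReal.ofReal (α r) := ENNReal.ofReal_le_ofReal (hα hr hs.le hrs.le)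

/-- if the deviation inequality
`μ(Q_t f > m(f) + r) ≤ α(√(rt))` holds for all measurable `f : X → ℝ ∪ {+∞}` bounded
from below with `μ(f = +∞) < 1/2`, then `μ` satisfies the concentration inequality
`μ(A_r) ≥ 1 - α(r)` for every Borel set `A` with `μ(A) ≥ 1/2` and every `r ≥ 0`. -/
theorem concentration_of_infConv_deviation {X : Type*} [MetricSpace X] [MeasurableSpace X]
    [OpensMeasurableSpace X] (μ : Measure X) [IsProbabilityMeasure μ]
    (α : ℝ → ℝ) (hα : AntitoneOn α (Ici 0))
    (H : ∀ f : X → EReal, Measurable f → (∃ c : ℝ, ∀ x, (c : EReal) ≤ f x) →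
      μ {x | f x = ⊤} < 1 / 2 →
      ∀ r t : ℝ, 0 < r → 0 < t →
        μ {x | ((med μ f + r : ℝ) : EReal) < infConvE t f x} ≤
          ENNReal.ofReal (α (Real.sqrt (r * t)))) :
    ∀ A : Set X, MeasurableSet A → 1 / 2 ≤ μ A → ∀ r : ℝ, 0 ≤ r →
      1 - ENNReal.ofReal (α r) ≤ μ {x | Metric.infDist x A ≤ r} :=
  concentration_of_infConv_deviation_general μ α hα H
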